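/- arXiv:1204.0272 — 3 statements merged into one kernel-verified Lean document; each statement's English description precedes it below -/
import Mathlib

section
/- Let A ⊆ ℝ be an open invex set with respect to η : A × A → ℝ and a, b ∈ A with a < a + η(b,a), with f′ integrable on [a, a+η(b,a)]. If f : A → ℝ is differentiable and |f′| is preinvex with respect to η on A, then for every α > 0: |(f(a)+f(a+η(b,a)))/2 − (Γ(α+1)/(2 η(b,a)^α))[J_{a+}^α f(a+η(b,a)) + J_{(a+η(b,a))−}^α f(a)]| ≤ (η(b,a)/(2(α+1))) (1 − 1/2^α) (|f′(a)| + |f′(b)|). -/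
open MeasureTheory intervalIntegral

/-- Riemann-Liouville left fractional integral `J_{a+}^α f(x)`. -/
noncomputable def JL (α a x : ℝ) (f : ℝ → ℝ) : ℝ :=
  (1 / Real.Gamma α) * ∫ t in a..x, (x - t) ^ (α - 1) * f t

/-- Riemann-Liouville right fractional integral `J_{b-}^α f(x)`. -/
noncomputable def JR (α x b : ℝ) (f : ℝ → ℝ) : ℝ :=
  (1 / Real.Gamma α) * ∫ t in x..b, (t - x) ^ (α - 1) * f t

/-- `A` is invex with respect to `η`. -/
def InvexSet (A : Set ℝ) (η : ℝ → ℝ → ℝ) : Prop :=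
  ∀ x ∈ A, ∀ y ∈ A, ∀ t ∈ Set.Icc (0:ℝ) 1, x + t * η y x ∈ A

/-- `f` is preinvex with respect to `η` on `A`. -/
def PreinvexOn (A : Set ℝ) (η : ℝ → ℝ → ℝ) (f : ℝ → ℝ) : Prop :=
  ∀ x ∈ A, ∀ y ∈ A, ∀ t ∈ Set.Icc (0:ℝ) 1,
    f (x + t * η y x) ≤ (1 - t) * f x + t * f y

/-- Condition C of Mohan and Neogy. -/
def CondC (A : Set ℝ) (η : ℝ → ℝ → ℝ) : Prop :=
  ∀ x ∈ A, ∀ y ∈ A, ∀ t ∈ Set.Icc (0:ℝ) 1,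
    η y (y + t * η x y) = -t * η x y ∧ η x (y + t * η x y) = (1 - t) * η x y

/-!
Integrating by parts against the kernel `(x - a)^α - (b - x)^α`, whose derivative is `α` times
the sum of the two Riemann–Liouville kernels, turns the left-hand side into
`(b - a)/2 · ∫₀¹ (t^α - (1 - t)^α) f'(a + t(b - a)) dt`. Preinvexity of `|f'|` bounds
`|f'(a + t η(b,a))|` by `(1 - t)|f'(a)| + t|f'(b)|`, and the weight `|t^α - (1 - t)^α|` is
symmetric under `t ↦ 1 - t`, so both endpoint values get the same coefficient
`∫₀¹ |t^α - (1 - t)^α| t dt = (1 - 2^(-α))/(α + 1)`.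
-/

open Set Real

lemma InvexSet.Icc_subset {A : Set ℝ} {η : ℝ → ℝ → ℝ} (hA : InvexSet A η) {a b : ℝ}
    (ha : a ∈ A) (hb : b ∈ A) (hη : 0 ≤ η b a) : Icc a (a + η b a) ⊆ A := by
  intro x hx
  rcases hη.eq_or_lt with hη0 | hηpos
  · rw [← hη0, add_zero] at hx
    rwa [le_antisymm hx.2 hx.1]
  · have hmem := hA a ha b hb ((x - a) / η b a)
      ⟨div_nonneg (sub_nonneg.2 hx.1) hηpos.le, (div_le_one hηpos).2 (by linarith [hx.2])⟩
    rwa [div_mul_cancel₀ _ hηpos.ne', add_sub_cancel] at hmem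

section Kernel

variable {α : ℝ}

lemma integral_half_one_rpow_sub_rpow_one_sub (hα : 0 ≤ α) :
    ∫ t in (1 / 2 : ℝ)..1, (t ^ α - (1 - t) ^ α) = (1 - 1 / 2 ^ α) / (α + 1) := by
  have hα1 : -1 < α := by linarith
  have hreflect : ∫ t in (1 / 2 : ℝ)..1, (1 - t) ^ α = ∫ t in (0 : ℝ)..(1 / 2), t ^ α := by
    rw [intervalIntegral.integral_comp_sub_left (fun t => t ^ α)]
    norm_num
  have hhalf : (1 / 2 : ℝ) ^ (α + 1) = 1 / 2 ^ α / 2 := by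
    rw [rpow_add_one (by norm_num), div_rpow zero_le_one zero_le_two, one_rpow]
    ring
  rw [intervalIntegral.integral_sub (by apply Continuous.intervalIntegrable; fun_prop)
      (by apply Continuous.intervalIntegrable; fun_prop),
    hreflect, integral_rpow (Or.inl hα1), integral_rpow (Or.inl hα1), one_rpow,
    zero_rpow (by linarith), hhalf]
  ring

lemma integral_abs_rpow_sub_rpow_one_sub (hα : 0 ≤ α) :
    ∫ t in (0 : ℝ)..1, |t ^ α - (1 - t) ^ α| = 2 * ((1 - 1 / 2 ^ α) / (α + 1)) := by
  have hcont : Continuous fun t : ℝ => |t ^ α - (1 - t) ^ α| := by fun_prop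
  have hreflect : ∫ t in (0 : ℝ)..(1 / 2), |t ^ α - (1 - t) ^ α|
      = ∫ t in (1 / 2 : ℝ)..1, |t ^ α - (1 - t) ^ α| := by
    calc ∫ t in (0 : ℝ)..(1 / 2), |t ^ α - (1 - t) ^ α|
        = ∫ t in (1 / 2 : ℝ)..1, |(1 - t) ^ α - (1 - (1 - t)) ^ α| := by
          rw [intervalIntegral.integral_comp_sub_left (fun t => |t ^ α - (1 - t) ^ α|)]
          norm_num
      _ = _ := by simp only [sub_sub_cancel, abs_sub_comm]
  have hsign : ∫ t in (1 / 2 : ℝ)..1, |t ^ α - (1 - t) ^ α|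
      = ∫ t in (1 / 2 : ℝ)..1, (t ^ α - (1 - t) ^ α) := by
    refine intervalIntegral.integral_congr fun t ht => abs_of_nonneg (sub_nonneg.2 ?_)
    rw [uIcc_of_le (by norm_num)] at ht
    exact rpow_le_rpow (by linarith [ht.2]) (by linarith [ht.1]) hα
  rw [← intervalIntegral.integral_add_adjacent_intervals (hcont.intervalIntegrable 0 (1 / 2))
    (hcont.intervalIntegrable _ _), hreflect, hsign, integral_half_one_rpow_sub_rpow_one_sub hα]
  ring

lemma integral_abs_rpow_sub_rpow_one_sub_mul_affine (hα : 0 ≤ α) (m M : ℝ) :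
    ∫ t in (0 : ℝ)..1, |t ^ α - (1 - t) ^ α| * ((1 - t) * m + t * M)
      = (m + M) * ((1 - 1 / 2 ^ α) / (α + 1)) := by
  have hreflect : ∫ t in (0 : ℝ)..1, |t ^ α - (1 - t) ^ α| * ((1 - t) * m + t * M)
      = ∫ t in (0 : ℝ)..1, |t ^ α - (1 - t) ^ α| * (t * m + (1 - t) * M) := by
    calc ∫ t in (0 : ℝ)..1, |t ^ α - (1 - t) ^ α| * ((1 - t) * m + t * M)
        = ∫ t in (0 : ℝ)..1,
            |(1 - t) ^ α - (1 - (1 - t)) ^ α| * ((1 - (1 - t)) * m + (1 - t) * M) := by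
          rw [intervalIntegral.integral_comp_sub_left
            (fun t => |t ^ α - (1 - t) ^ α| * ((1 - t) * m + t * M))]
          norm_num
      _ = _ := by simp only [sub_sub_cancel, abs_sub_comm]
  have hsum : (∫ t in (0 : ℝ)..1, |t ^ α - (1 - t) ^ α| * ((1 - t) * m + t * M))
      + ∫ t in (0 : ℝ)..1, |t ^ α - (1 - t) ^ α| * (t * m + (1 - t) * M)
      = (m + M) * ∫ t in (0 : ℝ)..1, |t ^ α - (1 - t) ^ α| := by
    rw [← intervalIntegral.integral_add (by apply Continuous.intervalIntegrable; fun_prop)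
      (by apply Continuous.intervalIntegrable; fun_prop), ← intervalIntegral.integral_const_mul]
    congr 1 with t
    ring
  rw [← hreflect, integral_abs_rpow_sub_rpow_one_sub hα] at hsum
  linarith

lemma abs_integral_rpow_sub_rpow_one_sub_mul_le (hα : 0 ≤ α) {φ : ℝ → ℝ} {m M : ℝ}
    (hφ : ∀ t ∈ Icc (0 : ℝ) 1, |φ t| ≤ (1 - t) * m + t * M) :
    |∫ t in (0 : ℝ)..1, (t ^ α - (1 - t) ^ α) * φ t|
      ≤ (m + M) * ((1 - 1 / 2 ^ α) / (α + 1)) := by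
  rw [← integral_abs_rpow_sub_rpow_one_sub_mul_affine hα m M, ← Real.norm_eq_abs]
  refine norm_integral_le_of_norm_le zero_le_one (ae_of_all _ fun t ht => ?_) ?_
  · rw [Real.norm_eq_abs, abs_mul]
    exact mul_le_mul_of_nonneg_left (hφ t (Ioc_subset_Icc_self ht)) (abs_nonneg _)
  · apply Continuous.intervalIntegrable
    fun_prop

end Kernel

section Identity

variable {f f' : ℝ → ℝ} {a b α : ℝ}

lemma integral_rpow_sub_rpow_mul_deriv (hab : a ≤ b) (hα : 0 < α)
    (hf : ContinuousOn f (Icc a b)) (hff' : ∀ x ∈ Ioo a b, HasDerivAt f (f' x) x)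
    (hf' : IntervalIntegrable f' volume a b) :
    ∫ x in a..b, ((x - a) ^ α - (b - x) ^ α) * f' x =
      (b - a) ^ α * (f a + f b) - Gamma (α + 1) * (JL α a b f + JR α a b f) := by
  rw [← uIcc_of_le hab] at hf
  have hIoo : Ioo (min a b) (max a b) = Ioo a b := by rw [min_eq_left hab, max_eq_right hab]
  have hleft : IntervalIntegrable (fun x => (x - a) ^ (α - 1)) volume a b := by
    simpa using (intervalIntegrable_rpow' (a := 0) (b := b - a)
      (by linarith : -1 < α - 1)).comp_sub_right a
  have hright : IntervalIntegrable (fun x => (b - x) ^ (α - 1)) volume a b := by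
    simpa using (intervalIntegrable_rpow' (a := b - a) (b := 0)
      (by linarith : -1 < α - 1)).comp_sub_left b
  have hderiv : ∀ x ∈ Ioo (min a b) (max a b), HasDerivAt (fun x => (x - a) ^ α - (b - x) ^ α)
      (α * (x - a) ^ (α - 1) + α * (b - x) ^ (α - 1)) x := by
    rw [hIoo]
    intro x hx
    have hl := ((hasDerivAt_id' x).sub_const a).rpow_const (p := α) (Or.inl (sub_pos.2 hx.1).ne')
    have hr := ((hasDerivAt_id' x).const_sub b).rpow_const (p := α) (Or.inl (sub_pos.2 hx.2).ne')
    exact (hl.sub hr).congr_deriv (by ring)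
  have hsplit : ∫ x in a..b, (α * (x - a) ^ (α - 1) + α * (b - x) ^ (α - 1)) * f x
      = α * ((∫ x in a..b, (b - x) ^ (α - 1) * f x) + ∫ x in a..b, (x - a) ^ (α - 1) * f x) := by
    rw [mul_add, ← intervalIntegral.integral_const_mul, ← intervalIntegral.integral_const_mul,
      ← integral_add ((hright.mul_continuousOn hf).const_mul α)
        ((hleft.mul_continuousOn hf).const_mul α)]
    congr 1 with x
    ring
  have hGamma : Gamma (α + 1) * (JL α a b f + JR α a b f)
      = α * ((∫ x in a..b, (b - x) ^ (α - 1) * f x) + ∫ x in a..b, (x - a) ^ (α - 1) * f x) := by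
    rw [JL, JR, Gamma_add_one hα.ne']
    field_simp [(Gamma_pos_of_pos hα).ne']
  have hk : Continuous fun x : ℝ => (x - a) ^ α - (b - x) ^ α :=
    ((continuous_id.sub continuous_const).rpow_const fun _ => Or.inr hα.le).sub
      ((continuous_const.sub continuous_id).rpow_const fun _ => Or.inr hα.le)
  rw [integral_mul_deriv_eq_deriv_mul_of_hasDerivAt hk.continuousOn hf hderiv (hIoo ▸ hff')
      ((hleft.const_mul α).add (hright.const_mul α)) hf', hsplit, hGamma]
  simp only [sub_self, zero_rpow hα.ne']
  ring

lemma integral_rpow_sub_rpow_mul_eq_unitInterval (hab : a < b) (g : ℝ → ℝ) :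
    ∫ x in a..b, ((x - a) ^ α - (b - x) ^ α) * g x =
      (b - a) ^ (α + 1) * ∫ t in (0 : ℝ)..1, (t ^ α - (1 - t) ^ α) * g (a + t * (b - a)) := by
  have hsub := smul_integral_comp_mul_add (a := (0 : ℝ)) (b := 1)
    (fun x => ((x - a) ^ α - (b - x) ^ α) * g x) (b - a) a
  simp only [smul_eq_mul, mul_zero, zero_add, mul_one, sub_add_cancel] at hsub
  rw [← hsub, rpow_add_one (sub_pos.2 hab).ne', mul_comm _ (b - a), mul_assoc]
  congr 1
  rw [← intervalIntegral.integral_const_mul]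
  refine intervalIntegral.integral_congr fun t ht => ?_
  rw [uIcc_of_le zero_le_one] at ht
  have hl : (b - a) * t + a - a = (b - a) * t := by ring
  have hr : b - ((b - a) * t + a) = (b - a) * (1 - t) := by ring
  rw [hl, hr, mul_rpow (sub_pos.2 hab).le ht.1, mul_rpow (sub_pos.2 hab).le (sub_nonneg.2 ht.2),
    add_comm _ a, mul_comm _ t]
  ring

theorem fractional_hermite_hadamard_identity (hab : a < b) (hα : 0 < α)
    (hf : ContinuousOn f (Icc a b)) (hff' : ∀ x ∈ Ioo a b, HasDerivAt f (f' x) x)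
    (hf' : IntervalIntegrable f' volume a b) :
    (f a + f b) / 2 - Gamma (α + 1) / (2 * (b - a) ^ α) * (JL α a b f + JR α a b f) =
      (b - a) / 2 * ∫ t in (0 : ℝ)..1, (t ^ α - (1 - t) ^ α) * f' (a + t * (b - a)) := by
  have h := integral_rpow_sub_rpow_mul_deriv hab.le hα hf hff' hf'
  rw [integral_rpow_sub_rpow_mul_eq_unitInterval hab, rpow_add_one (sub_pos.2 hab).ne'] at h
  set I := ∫ t in (0 : ℝ)..1, (t ^ α - (1 - t) ^ α) * f' (a + t * (b - a))
  have hpos : 0 < (b - a) ^ α := rpow_pos_of_pos (sub_pos.2 hab) α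
  field_simp
  linear_combination -h

end Identity

theorem fractional_estimate_abs_preinvex_general
    (A : Set ℝ) (η : ℝ → ℝ → ℝ) (a b : ℝ) (f : ℝ → ℝ) (α : ℝ)
    (hinv : InvexSet A η) (ha : a ∈ A) (hb : b ∈ A)
    (hab : a < a + η b a)
    (hdiff : ∀ x ∈ A, DifferentiableAt ℝ f x)
    (hint : IntervalIntegrable (deriv f) volume a (a + η b a))
    (hpre : PreinvexOn A η (fun x => |deriv f x|))
    (hα : 0 < α) :
    |(f a + f (a + η b a)) / 2 -
        Real.Gamma (α + 1) / (2 * (η b a) ^ α) *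
          (JL α a (a + η b a) f + JR α a (a + η b a) f)| ≤
      η b a / (2 * (α + 1)) * (1 - 1 / 2 ^ α) * (|deriv f a| + |deriv f b|) := by
  have hη : 0 < η b a := lt_add_iff_pos_right a |>.1 hab
  have hderiv : ∀ x ∈ Icc a (a + η b a), HasDerivAt f (deriv f x) x :=
    fun x hx => (hdiff x (hinv.Icc_subset ha hb hη.le hx)).hasDerivAt
  have hidentity := fractional_hermite_hadamard_identity hab hα
    (fun x hx => (hderiv x hx).continuousAt.continuousWithinAt)
    (fun x hx => hderiv x (Ioo_subset_Icc_self hx)) hint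
  rw [add_sub_cancel_left] at hidentity
  rw [hidentity, abs_mul, abs_of_pos (half_pos hη)]
  calc η b a / 2 * |∫ t in (0 : ℝ)..1, (t ^ α - (1 - t) ^ α) * deriv f (a + t * η b a)|
      ≤ η b a / 2 * ((|deriv f a| + |deriv f b|) * ((1 - 1 / 2 ^ α) / (α + 1))) := by
        gcongr
        exact abs_integral_rpow_sub_rpow_one_sub_mul_le hα.le fun t ht => hpre a ha b hb t ht
    _ = η b a / (2 * (α + 1)) * (1 - 1 / 2 ^ α) * (|deriv f a| + |deriv f b|) := by
        field_simp

theorem fractional_estimate_abs_preinvex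
    (A : Set ℝ) (η : ℝ → ℝ → ℝ) (a b : ℝ) (f : ℝ → ℝ) (α : ℝ)
    (hA : IsOpen A) (hinv : InvexSet A η) (ha : a ∈ A) (hb : b ∈ A)
    (hab : a < a + η b a)
    (hdiff : ∀ x ∈ A, DifferentiableAt ℝ f x)
    (hint : IntervalIntegrable (deriv f) volume a (a + η b a))
    (hpre : PreinvexOn A η (fun x => |deriv f x|))
    (hα : 0 < α) :
    |(f a + f (a + η b a)) / 2 -
        Real.Gamma (α + 1) / (2 * (η b a) ^ α) *
          (JL α a (a + η b a) f + JR α a (a + η b a) f)| ≤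
      η b a / (2 * (α + 1)) * (1 - 1 / 2 ^ α) * (|deriv f a| + |deriv f b|) :=
  fractional_estimate_abs_preinvex_general A η a b f α hinv ha hb hab hdiff hint hpre hα
end

section
/- For a differentiable function f : A → ℝ with A ⊆ ℝ open invex with respect to η, a, b ∈ A with a < a + η(b,a) and f′ integrable on [a, a+η(b,a)], we have ∫_0^1 t^α f′(a + t·η(b,a)) dt = f(a+η(b,a))/η(b,a) − (Γ(α+1)/η(b,a)^{α+1}) · J_{(a+η(b,a))−}^α f(a), for every α > 0. -/
/-!
The substitution `x = a + t η(b,a)` turns the left-hand side into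
`η(b,a)^(-(α+1)) ∫_a^{a+η(b,a)} (x - a)^α f'(x) dx`. Integrating by parts against `(x - a)^α`,
whose derivative is `α (x - a)^(α-1)`, gives `η(b,a)^α f(a + η(b,a))` minus
`α ∫_a^{a+η(b,a)} (x - a)^(α-1) f(x) dx = Γ(α+1) J_{(a+η(b,a))−}^α f(a)`.
Invexity of `A` is what keeps the whole interval `[a, a + η(b,a)]` inside `A`, where `f` is
differentiable.
-/

open MeasureTheory intervalIntegral

theorem InvexSet.uIcc_subset {A : Set ℝ} {η : ℝ → ℝ → ℝ} (hinv : InvexSet A η)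
    {a b : ℝ} (ha : a ∈ A) (hb : b ∈ A) : Set.uIcc a (a + η b a) ⊆ A := by
  rw [← segment_eq_uIcc, segment_eq_image']
  rintro _ ⟨t, ht, rfl⟩
  simpa [mul_comm] using hinv a ha b hb t ht

theorem hasDerivAt_sub_rpow {a x α : ℝ} (hx : a < x) :
    HasDerivAt (fun y => (y - a) ^ α) (α * (x - a) ^ (α - 1)) x := by
  simpa using ((hasDerivAt_id x).sub_const a).rpow_const (Or.inl (sub_pos.2 hx).ne')

theorem intervalIntegrable_sub_rpow {a b α : ℝ} (hα : -1 < α) :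
    IntervalIntegrable (fun x => (x - a) ^ α) volume a b := by
  simpa using (intervalIntegrable_rpow' hα (a := 0) (b := b - a)).comp_sub_right a

/- `(x - a) ^ α` need not be differentiable at `a` when `α < 1`; the one-sided form of integration
by parts only asks for derivatives on the open interval. -/
theorem integral_sub_rpow_mul_deriv_eq {f : ℝ → ℝ} {a b α : ℝ} (hab : a ≤ b) (hα : 0 < α)
    (hf : ∀ x ∈ Set.Icc a b, DifferentiableAt ℝ f x)
    (hf' : IntervalIntegrable (deriv f) volume a b) :
    ∫ x in a..b, (x - a) ^ α * deriv f x =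
      (b - a) ^ α * f b - Real.Gamma (α + 1) * JR α a b f := by
  have hpow_cont : ContinuousOn (fun x => (x - a) ^ α) (Set.uIcc a b) :=
    (continuous_id.sub continuous_const).continuousOn.rpow_const fun _ _ => Or.inr hα.le
  have hf_cont : ContinuousOn f (Set.uIcc a b) := fun x hx =>
    (hf x (Set.uIcc_of_le hab ▸ hx)).continuousAt.continuousWithinAt
  have hpow_deriv : ∀ x ∈ Set.Ioo (min a b) (max a b),
      HasDerivWithinAt (fun x => (x - a) ^ α) (α * (x - a) ^ (α - 1)) (Set.Ioi x) x :=
    fun x hx => (hasDerivAt_sub_rpow (by simpa [hab] using hx.1)).hasDerivWithinAt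
  have hf_deriv : ∀ x ∈ Set.Ioo (min a b) (max a b),
      HasDerivWithinAt f (deriv f x) (Set.Ioi x) x := fun x hx =>
    (hf x (Set.Ioo_subset_Icc_self (by simpa [hab] using hx))).hasDerivAt.hasDerivWithinAt
  rw [integral_mul_deriv_eq_deriv_mul_of_hasDeriv_right hpow_cont hf_cont hpow_deriv hf_deriv
    ((intervalIntegrable_sub_rpow (by linarith)).const_mul α) hf']
  simp_rw [mul_assoc, intervalIntegral.integral_const_mul]
  rw [JR, Real.Gamma_add_one hα.ne', sub_self, Real.zero_rpow hα.ne']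
  field_simp [(Real.Gamma_pos_of_pos hα).ne']
  ring

theorem integral_rpow_mul_comp_add_mul {g : ℝ → ℝ} {a c α : ℝ} (hc : 0 < c) :
    ∫ t in (0:ℝ)..1, t ^ α * g (a + t * c) =
      (c ^ (α + 1))⁻¹ * ∫ x in a..a + c, (x - a) ^ α * g x := by
  have h := smul_integral_comp_mul_add (fun x => (x - a) ^ α * g x) c a (a := 0) (b := 1)
  simp only [mul_zero, zero_add, mul_one, add_sub_cancel_right, smul_eq_mul, add_comm c a] at h
  rw [← h, ← intervalIntegral.integral_const_mul, ← intervalIntegral.integral_const_mul]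
  refine integral_congr fun t ht => ?_
  rw [Set.uIcc_of_le zero_le_one] at ht
  rw [Real.mul_rpow hc.le ht.1, Real.rpow_add_one hc.ne', add_comm (c * t), mul_comm c t]
  field_simp

theorem integral_tpow_deriv_general
    (A : Set ℝ) (η : ℝ → ℝ → ℝ) (a b : ℝ) (f : ℝ → ℝ) (α : ℝ)
    (hinv : InvexSet A η) (ha : a ∈ A) (hb : b ∈ A)
    (hab : a < a + η b a)
    (hdiff : ∀ x ∈ A, DifferentiableAt ℝ f x)
    (hint : IntervalIntegrable (deriv f) volume a (a + η b a))
    (hα : 0 < α) :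
    ∫ t in (0:ℝ)..1, t ^ α * deriv f (a + t * η b a) =
      f (a + η b a) / η b a -
        Real.Gamma (α + 1) / (η b a) ^ (α + 1) * JR α a (a + η b a) f := by
  have hη : 0 < η b a := by linarith
  have hsub : Set.Icc a (a + η b a) ⊆ A := Set.uIcc_of_le hab.le ▸ hinv.uIcc_subset ha hb
  rw [integral_rpow_mul_comp_add_mul hη,
    integral_sub_rpow_mul_deriv_eq hab.le hα (fun x hx => hdiff x (hsub hx)) hint,
    add_sub_cancel_left, Real.rpow_add_one hη.ne']
  field_simp

theorem integral_tpow_deriv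
    (A : Set ℝ) (η : ℝ → ℝ → ℝ) (a b : ℝ) (f : ℝ → ℝ) (α : ℝ)
    (hA : IsOpen A) (hinv : InvexSet A η) (ha : a ∈ A) (hb : b ∈ A)
    (hab : a < a + η b a)
    (hdiff : ∀ x ∈ A, DifferentiableAt ℝ f x)
    (hint : IntervalIntegrable (deriv f) volume a (a + η b a))
    (hα : 0 < α) :
    ∫ t in (0:ℝ)..1, t ^ α * deriv f (a + t * η b a) =
      f (a + η b a) / η b a -
        Real.Gamma (α + 1) / (η b a) ^ (α + 1) * JR α a (a + η b a) f :=
  integral_tpow_deriv_general A η a b f α hinv ha hb hab hdiff hint hα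
end

section
/- For a differentiable function f : A → ℝ with A ⊆ ℝ open invex with respect to η, a, b ∈ A with a < a + η(b,a) and f′ integrable on [a, a+η(b,a)], we have −∫_0^1 (1−t)^α f′(a + t·η(b,a)) dt = f(a)/η(b,a) − (Γ(α+1)/η(b,a)^{α+1}) · J_{a+}^α f(a+η(b,a)), for every α > 0. -/
/-!
With `c = η b a > 0` and `g t = f (a + t c)`, the left side is `-(1/c) ∫₀¹ (1 - t)^α g'(t) dt`.
Integrating by parts (the boundary term at `t = 1` vanishes because `α > 0`) turns it into
`(g 0 - α ∫₀¹ (1 - t)^(α - 1) g(t) dt) / c`, and the substitution `x = a + t c` identifies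
`∫₀¹ (1 - t)^(α - 1) g(t) dt` with `Γ(α) c^(-α) J_{a+}^α f(a + c)`; finally `αΓ(α) = Γ(α + 1)`.
-/

open MeasureTheory intervalIntegral

open Set
open scoped Interval

theorem integral_one_sub_rpow_mul_deriv {g g' : ℝ → ℝ} {α : ℝ} (hα : 0 < α)
    (hg : ContinuousOn g (Icc 0 1)) (hgg' : ∀ t ∈ Ioo (0 : ℝ) 1, HasDerivAt g (g' t) t)
    (hg' : IntervalIntegrable g' volume 0 1) :
    ∫ t in (0 : ℝ)..1, (1 - t) ^ α * g' t =
      α * (∫ t in (0 : ℝ)..1, (1 - t) ^ (α - 1) * g t) - g 0 := by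
  have hu : ContinuousOn (fun t : ℝ => (1 - t) ^ α) [[0, 1]] := fun t _ =>
    ((continuous_const.sub continuous_id).continuousAt.rpow_const
      (Or.inr hα.le)).continuousWithinAt
  have huu' : ∀ t ∈ Ioo (min 0 1) (max 0 1),
      HasDerivAt (fun t : ℝ => (1 - t) ^ α) (-(α * (1 - t) ^ (α - 1))) t := by
    intro t ht
    simp only [zero_le_one, min_eq_left, max_eq_right, mem_Ioo] at ht
    simpa using ((hasDerivAt_id' t).const_sub 1).rpow_const (Or.inl (by linarith))
  have hu' : IntervalIntegrable (fun t : ℝ => -(α * (1 - t) ^ (α - 1))) volume 0 1 := by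
    have := (intervalIntegrable_rpow' (a := 1) (b := 0) (r := α - 1) (by linarith)).comp_sub_left 1
    simp only [sub_self, sub_zero] at this
    exact (this.const_mul α).neg
  rw [integral_mul_deriv_eq_deriv_mul_of_hasDerivAt hu (by simpa using hg) huu'
    (by simpa using hgg') hu' hg']
  simp only [sub_self, Real.zero_rpow hα.ne', sub_zero, Real.one_rpow, neg_mul,
    intervalIntegral.integral_neg, mul_assoc, intervalIntegral.integral_const_mul]
  ring

theorem JL_add_eq_integral_unitInterval {f : ℝ → ℝ} {a c : ℝ} (α : ℝ) (hc : 0 < c) :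
    JL α a (a + c) f =
      c ^ α / Real.Gamma α * ∫ t in (0 : ℝ)..1, (1 - t) ^ (α - 1) * f (a + t * c) := by
  have hsubst := smul_integral_comp_add_mul (a := 0) (b := 1)
    (fun x => (a + c - x) ^ (α - 1) * f x) c a
  simp only [mul_zero, add_zero, mul_one, smul_eq_mul] at hsubst
  rw [JL, ← hsubst,
    integral_congr (g := fun t => c ^ (α - 1) * ((1 - t) ^ (α - 1) * f (a + t * c))),
    intervalIntegral.integral_const_mul, Real.rpow_sub_one hc.ne']
  · field_simp
  · intro t ht
    rw [uIcc_of_le zero_le_one] at ht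
    dsimp only
    rw [show a + c - (a + c * t) = c * (1 - t) by ring, Real.mul_rpow hc.le (by linarith [ht.2]),
      mul_comm c t]
    ring

theorem integral_one_sub_tpow_deriv_general
    (A : Set ℝ) (η : ℝ → ℝ → ℝ) (a b : ℝ) (f : ℝ → ℝ) (α : ℝ)
    (hinv : InvexSet A η) (ha : a ∈ A) (hb : b ∈ A)
    (hab : a < a + η b a)
    (hdiff : ∀ x ∈ A, DifferentiableAt ℝ f x)
    (hint : IntervalIntegrable (deriv f) volume a (a + η b a))
    (hα : 0 < α) :
    -∫ t in (0:ℝ)..1, (1 - t) ^ α * deriv f (a + t * η b a) =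
      f a / η b a -
        Real.Gamma (α + 1) / (η b a) ^ (α + 1) * JL α a (a + η b a) f := by
  set c := η b a
  have hc : 0 < c := by linarith
  have hdiffAt (t : ℝ) (ht : t ∈ Icc (0 : ℝ) 1) : DifferentiableAt ℝ f (a + t * c) :=
    hdiff _ (hinv a ha b hb t ht)
  have hint' : IntervalIntegrable (fun t => deriv f (a + t * c) * c) volume 0 1 := by
    have := (hint.comp_add_left a).comp_mul_right (c := c)
    simp only [sub_self, zero_div, add_sub_cancel_left, div_self hc.ne'] at this
    exact this.mul_const c
  have hibp := integral_one_sub_rpow_mul_deriv hα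
    (fun t ht => ((hdiffAt t ht).continuousAt.comp' (f := fun t => a + t * c)
      (by fun_prop)).continuousWithinAt)
    (fun t ht => (hdiffAt t (Ioo_subset_Icc_self ht)).hasDerivAt.comp t
      (((hasDerivAt_id t).mul_const c).const_add a |>.congr_deriv (one_mul c))) hint'
  simp only [← mul_assoc, intervalIntegral.integral_mul_const, zero_mul, add_zero] at hibp
  rw [JL_add_eq_integral_unitInterval α hc, Real.Gamma_add_one hα.ne', Real.rpow_add_one hc.ne']
  generalize ∫ t in (0 : ℝ)..1, (1 - t) ^ α * deriv f (a + t * c) = I₂ at hibp ⊢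
  generalize ∫ t in (0 : ℝ)..1, (1 - t) ^ (α - 1) * f (a + t * c) = I₁ at hibp ⊢
  have := (Real.Gamma_pos_of_pos hα).ne'
  have := (Real.rpow_pos_of_pos hc α).ne'
  field_simp
  linarith

theorem integral_one_sub_tpow_deriv
    (A : Set ℝ) (η : ℝ → ℝ → ℝ) (a b : ℝ) (f : ℝ → ℝ) (α : ℝ)
    (hA : IsOpen A) (hinv : InvexSet A η) (ha : a ∈ A) (hb : b ∈ A)
    (hab : a < a + η b a)
    (hdiff : ∀ x ∈ A, DifferentiableAt ℝ f x)
    (hint : IntervalIntegrable (deriv f) volume a (a + η b a))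
    (hα : 0 < α) :
    -∫ t in (0:ℝ)..1, (1 - t) ^ α * deriv f (a + t * η b a) =
      f a / η b a -
        Real.Gamma (α + 1) / (η b a) ^ (α + 1) * JL α a (a + η b a) f :=
  integral_one_sub_tpow_deriv_general A η a b f α hinv ha hb hab hdiff hint hα
end
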